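/- Let n ≥ 1, d ≥ 1, A = {a ∈ ℕ^n : |a| = d}, k ≥ 1, i ≥ 2, c ∈ ℕ^n with |c| = k+id. Suppose v, w ∈ A satisfy v ≤ c, w ≤ c, and v = w + e_j - e_l for some indices j ≠ l (an elementary move). Then there exists u ∈ A with u ≤ c such that v + u ≤ c and w + u ≤ c componentwise. -/

import Mathlib

/-!
Since `v ≤ w + e_j`, the pointwise maximum `v ⊔ w` has total at most `d + 1`. As
`|c| = k + i d ≥ 2 d + 1`, the slack `c - v ⊔ w` has total at least `d`, and any `u` of total `d`
below that slack fits on top of both `v` and `w`.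
-/

open Finset

theorem exists_le_sum_eq {ι : Type*} [Fintype ι] [DecidableEq ι] (m : ι → ℕ) {d : ℕ}
    (hd : d ≤ ∑ t, m t) : ∃ u ≤ m, ∑ t, u t = d := by
  induction d with
  | zero => exact ⟨0, fun t => Nat.zero_le _, by simp⟩
  | succ d ih =>
    obtain ⟨u, hum, rfl⟩ := ih (by omega)
    obtain ⟨t, -, ht⟩ : ∃ t ∈ univ, u t < m t := exists_lt_of_sum_lt (by omega)
    refine ⟨u + Pi.single t 1, fun s => ?_, by simp [sum_add_distrib]⟩
    rcases eq_or_ne s t with rfl | hst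
    · simpa using ht
    · simpa [hst] using hum s

theorem exists_add_le_of_sum_add_le {ι : Type*} [Fintype ι] [DecidableEq ι] {m c : ι → ℕ}
    (hmc : m ≤ c) {d : ℕ} (hd : ∑ t, m t + d ≤ ∑ t, c t) :
    ∃ u : ι → ℕ, ∑ t, u t = d ∧ m + u ≤ c := by
  have hsum : ∑ t, (c - m) t = ∑ t, c t - ∑ t, m t := sum_tsub_distrib _ fun t _ => hmc t
  obtain ⟨u, huc, hu⟩ := exists_le_sum_eq (c - m) (d := d) (by omega)
  exact ⟨u, hu, fun t =>
    (add_le_add_right (huc t) (m t)).trans_eq (add_tsub_cancel_of_le (hmc t))⟩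

theorem sum_sup_le_of_le_add_single {ι : Type*} [Fintype ι] [DecidableEq ι] {v w : ι → ℕ}
    {j : ι} (h : v ≤ w + Pi.single j 1) : ∑ t, (v ⊔ w) t ≤ ∑ t, w t + 1 := calc
  ∑ t, (v ⊔ w) t ≤ ∑ t, (w + Pi.single j 1 : ι → ℕ) t :=
      sum_le_sum fun t _ => sup_le (h t) le_self_add
  _ = ∑ t, w t + 1 := by simp [sum_add_distrib]

theorem stmt9_general (n d k i : ℕ) (hk : 1 ≤ k) (hi : 2 ≤ i)
    (c : Fin n → ℕ) (hc : ∑ t, c t = k + i * d)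
    (v w : Fin n → ℕ) (hw : ∑ t, w t = d)
    (hvc : ∀ t, v t ≤ c t) (hwc : ∀ t, w t ≤ c t)
    (j l : Fin n)
    (hmove : ∀ t, (v t : ℤ)
      = (w t : ℤ) + (if t = j then 1 else 0) - (if t = l then 1 else 0)) :
    ∃ u : Fin n → ℕ, (∑ t, u t = d) ∧ (∀ t, u t ≤ c t) ∧
      (∀ t, v t + u t ≤ c t) ∧ (∀ t, w t + u t ≤ c t) := by
  have hvw : v ≤ w + Pi.single j 1 := Pi.le_def.mpr fun t => by
    have := hmove t
    rw [Pi.add_apply, Pi.single_apply]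
    split_ifs at this ⊢ <;> omega
  have hroom : ∑ t, (v ⊔ w) t + d ≤ ∑ t, c t := by
    have := sum_sup_le_of_le_add_single hvw
    nlinarith
  obtain ⟨u, hu, hle⟩ := exists_add_le_of_sum_add_le (sup_le hvc hwc) hroom
  refine ⟨u, hu, fun t => le_add_self.trans (hle t), fun t => ?_, fun t => ?_⟩
  · exact (add_le_add_left le_sup_left u).trans hle t
  · exact (add_le_add_left le_sup_right u).trans hle t

theorem stmt9 (n d k i : ℕ) (hn : 1 ≤ n) (hd : 1 ≤ d) (hk : 1 ≤ k) (hi : 2 ≤ i)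
    (c : Fin n → ℕ) (hc : ∑ t, c t = k + i * d)
    (v w : Fin n → ℕ) (hv : ∑ t, v t = d) (hw : ∑ t, w t = d)
    (hvc : ∀ t, v t ≤ c t) (hwc : ∀ t, w t ≤ c t)
    (j l : Fin n) (hjl : j ≠ l)
    (hmove : ∀ t, (v t : ℤ)
      = (w t : ℤ) + (if t = j then 1 else 0) - (if t = l then 1 else 0)) :
    ∃ u : Fin n → ℕ, (∑ t, u t = d) ∧ (∀ t, u t ≤ c t) ∧
      (∀ t, v t + u t ≤ c t) ∧ (∀ t, w t + u t ≤ c t) :=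
  stmt9_general n d k i hk hi c hc v w hw hvc hwc j l hmove
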